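/- arXiv:1408.3069 — 16 statements merged into one kernel-verified Lean document; each statement's English description precedes it below -/
import Mathlib

section
/- Let A be a vector space over a field F of characteristic 0 equipped with a bilinear product *. Define the polarized products {a,b} = a*b + b*a and [a,b] = a*b − b*a. Then the product * is associative if and only if, for all a, b, c in A, both identities [a,{b,c}] = {[a,b],c} + {b,[a,c]} and [b,[a,c]] = {{a,b},c} − {a,{b,c}} hold (i.e. each Lie bracket operator is a derivation of the Jordan product, and the permuted Lie triple product equals the Jordan associator). -/
/-- Polarization: a bilinear product `m` on a vector space `A` over a field `F` of
characteristic 0 is associative if and only if the Lie bracket `l a b = m a b - m b a`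
is a derivation of the Jordan product `j a b = m a b + m b a`, and the permuted Lie
triple product equals the Jordan associator. -/
theorem stmt_0 {F : Type*} [Field F] [CharZero F]
    {A : Type*} [AddCommGroup A] [Module F A]
    (m : A →ₗ[F] A →ₗ[F] A)
    (j l : A → A → A)
    (hj : ∀ x y : A, j x y = m x y + m y x)
    (hl : ∀ x y : A, l x y = m x y - m y x) :
    (∀ x y z : A, m (m x y) z = m x (m y z)) ↔
      ∀ a b c : A,
        l a (j b c) = j (l a b) c + j b (l a c) ∧
        l b (l a c) = j (j a b) c - j a (j b c) := by
  constructor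
  · intro h a b c
    constructor <;>
    · simp only [hj, hl, map_add, map_sub, LinearMap.add_apply, LinearMap.sub_apply, h]
      abel
  · intro h x y z
    simp only [hj, hl, map_add, map_sub, LinearMap.add_apply, LinearMap.sub_apply] at h
    have e1 := (h x z y).1
    have e2 := (h x z y).2
    have e3 := (h z x y).1
    have e4 := (h z x y).2
    have key : (4 : F) • m (m x y) z = (4 : F) • m x (m y z) := by
      linear_combination (norm := module) -e1 - e2 - e3 + e4
    exact smul_right_injective A (by norm_num : (4 : F) ≠ 0) key
end

section
/- Let A be an associative interchange algebra over a field F of characteristic 0, with Jordan products {x,y}_∘ = x∘y + y∘x and {x,y}_• = x•y + y•x. Then for all a, b in A: {{a,b}_∘, {a,{a,a}_∘}_∘}_• = {{a,a}_•, {b,{a,a}_∘}_•}_∘. -/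
/-- Identity relating the two Jordan products in an associative interchange algebra. -/
theorem stmt_2 {F : Type*} [Field F] [CharZero F]
    {A : Type*} [AddCommGroup A] [Module F A]
    (mo mb : A →ₗ[F] A →ₗ[F] A)
    (oassoc : ∀ x y z : A, mo (mo x y) z = mo x (mo y z))
    (bassoc : ∀ x y z : A, mb (mb x y) z = mb x (mb y z))
    (interchange : ∀ w x y z : A, mb (mo w x) (mo y z) = mo (mb w y) (mb x z))
    (jo jb : A → A → A)
    (hjo : ∀ x y : A, jo x y = mo x y + mo y x)
    (hjb : ∀ x y : A, jb x y = mb x y + mb y x)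
    (a b : A) :
    jb (jo a b) (jo a (jo a a)) = jo (jb a a) (jb b (jo a a)) := by
  have h1 : mb (mo a b) (mo a (mo a a)) = mo (mb a a) (mb b (mo a a)) :=
    interchange a b a (mo a a)
  have h1' : mb (mo a b) (mo (mo a a) a) = mo (mb a a) (mb b (mo a a)) := by
    rw [oassoc]; exact h1
  have h2 : mb (mo b a) (mo (mo a a) a) = mo (mb b (mo a a)) (mb a a) :=
    interchange b a (mo a a) a
  have h2' : mb (mo b a) (mo a (mo a a)) = mo (mb b (mo a a)) (mb a a) := by
    rw [← oassoc]; exact h2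
  have h3 : mb (mo a (mo a a)) (mo a b) = mo (mb a a) (mb (mo a a) b) :=
    interchange a (mo a a) a b
  have h3' : mb (mo (mo a a) a) (mo a b) = mo (mb a a) (mb (mo a a) b) := by
    rw [oassoc]; exact h3
  have h4 : mb (mo (mo a a) a) (mo b a) = mo (mb (mo a a) b) (mb a a) :=
    interchange (mo a a) a b a
  have h4' : mb (mo a (mo a a)) (mo b a) = mo (mb (mo a a) b) (mb a a) := by
    rw [← oassoc]; exact h4
  simp only [hjo, hjb, map_add, LinearMap.add_apply, h1, h1', h2, h2', h3, h3', h4, h4']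
  abel
end

section
/- Let A be an associative interchange algebra over a field F of characteristic 0, with Jordan products {x,y}_∘ = x∘y + y∘x and {x,y}_• = x•y + y•x. Then for all a, b in A: {{a,a}_∘, {b,{a,a}_•}_∘}_• = {{a,b}_•, {a,{a,a}_•}_•}_∘. -/
/-- Identity relating the two Jordan products in an associative interchange algebra. -/
theorem stmt_3 {F : Type*} [Field F] [CharZero F]
    {A : Type*} [AddCommGroup A] [Module F A]
    (mo mb : A →ₗ[F] A →ₗ[F] A)
    (oassoc : ∀ x y z : A, mo (mo x y) z = mo x (mo y z))
    (bassoc : ∀ x y z : A, mb (mb x y) z = mb x (mb y z))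
    (interchange : ∀ w x y z : A, mb (mo w x) (mo y z) = mo (mb w y) (mb x z))
    (jo jb : A → A → A)
    (hjo : ∀ x y : A, jo x y = mo x y + mo y x)
    (hjb : ∀ x y : A, jb x y = mb x y + mb y x)
    (a b : A) :
    jb (jo a a) (jo b (jb a a)) = jo (jb a b) (jb a (jb a a)) := by
  simp only [hjo, hjb, map_add, LinearMap.add_apply, interchange, bassoc]
  abel
end

section
/- Let A be an associative interchange algebra over a field F of characteristic 0, with Jordan products {x,y}_∘ = x∘y + y∘x and {x,y}_• = x•y + y•x. Then for every a in A: {{a,a}_∘, {a,{a,{a,a}_•}_∘}_•}_• = {{a,{a,a}_∘}_•, {a,{a,a}_•}_∘}_•. -/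
/-- Identity relating the two Jordan products in an associative interchange algebra. -/
theorem stmt_4 {F : Type*} [Field F] [CharZero F]
    {A : Type*} [AddCommGroup A] [Module F A]
    (mo mb : A →ₗ[F] A →ₗ[F] A)
    (oassoc : ∀ x y z : A, mo (mo x y) z = mo x (mo y z))
    (bassoc : ∀ x y z : A, mb (mb x y) z = mb x (mb y z))
    (interchange : ∀ w x y z : A, mb (mo w x) (mo y z) = mo (mb w y) (mb x z))
    (jo jb : A → A → A)
    (hjo : ∀ x y : A, jo x y = mo x y + mo y x)
    (hjb : ∀ x y : A, jb x y = mb x y + mb y x)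
    (a : A) :
    jb (jo a a) (jb a (jo a (jb a a))) = jb (jb a (jo a a)) (jo a (jb a a)) := by
  have hcomm : mb a (mb a a) = mb (mb a a) a := (bassoc a a a).symm
  have hxo : mb (mo a a) (mo a (mb a a)) = mb (mo a (mb a a)) (mo a a) := by
    rw [interchange, interchange, hcomm]
  have hyo : mb (mo a a) (mo (mb a a) a) = mb (mo (mb a a) a) (mo a a) := by
    rw [interchange, interchange, hcomm]
  have r1 : mb (mo a a) (mb a (mo a (mb a a)))
      = mb (mb (mo a a) a) (mo a (mb a a)) := (bassoc _ _ _).symm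
  have r2 : mb (mo a a) (mb a (mo (mb a a) a))
      = mb (mb (mo a a) a) (mo (mb a a) a) := (bassoc _ _ _).symm
  have r3 : mb (mo a a) (mb (mo a (mb a a)) a)
      = mb (mo a (mb a a)) (mb (mo a a) a) := by
    rw [← bassoc, hxo, bassoc]
  have r4 : mb (mo a a) (mb (mo (mb a a) a) a)
      = mb (mo (mb a a) a) (mb (mo a a) a) := by
    rw [← bassoc, hyo, bassoc]
  have r5 : mb (mb a (mo a (mb a a))) (mo a a)
      = mb (mb a (mo a a)) (mo a (mb a a)) := by
    rw [bassoc, ← hxo, ← bassoc]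
  have r6 : mb (mb a (mo (mb a a) a)) (mo a a)
      = mb (mb a (mo a a)) (mo (mb a a) a) := by
    rw [bassoc, ← hyo, ← bassoc]
  have r7 : mb (mb (mo a (mb a a)) a) (mo a a)
      = mb (mo a (mb a a)) (mb a (mo a a)) := bassoc _ _ _
  have r8 : mb (mb (mo (mb a a) a) a) (mo a a)
      = mb (mo (mb a a) a) (mb a (mo a a)) := bassoc _ _ _
  simp only [hjo, hjb, map_add, LinearMap.add_apply]
  simp only [r1, r2, r3, r4, r5, r6, r7, r8]
  abel
end

section
/- Let A be an associative interchange algebra over a field F of characteristic 0, with Jordan products {x,y}_∘ = x∘y + y∘x and {x,y}_• = x•y + y•x. Then for every a in A: {{a,a}_•, {a,{a,{a,a}_∘}_•}_∘}_∘ = {{a,{a,a}_∘}_•, {a,{a,a}_•}_∘}_∘. -/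
/-- Identity relating the two Jordan products in an associative interchange algebra. -/
theorem stmt_5 {F : Type*} [Field F] [CharZero F]
    {A : Type*} [AddCommGroup A] [Module F A]
    (mo mb : A →ₗ[F] A →ₗ[F] A)
    (oassoc : ∀ x y z : A, mo (mo x y) z = mo x (mo y z))
    (bassoc : ∀ x y z : A, mb (mb x y) z = mb x (mb y z))
    (interchange : ∀ w x y z : A, mb (mo w x) (mo y z) = mo (mb w y) (mb x z))
    (jo jb : A → A → A)
    (hjo : ∀ x y : A, jo x y = mo x y + mo y x)
    (hjb : ∀ x y : A, jb x y = mb x y + mb y x)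
    (a : A) :
    jo (jb a a) (jo a (jb a (jo a a))) = jo (jb a (jo a a)) (jo a (jb a a)) := by
  have E1 : mo (mb a a) (mo (mb a (mo a a)) a) = mo (mb a (mo a a)) (mo (mb a a) a) := by
    rw [← oassoc, ← interchange a a a (mo a a), ← oassoc a a a, interchange a a (mo a a) a,
      oassoc]
  have E2 : mo (mb a a) (mo (mb (mo a a) a) a) = mo (mb (mo a a) a) (mo (mb a a) a) := by
    rw [← oassoc, ← interchange a (mo a a) a a, ← oassoc a a a, interchange (mo a a) a a a,
      oassoc]
  have E3 : mo (mo a (mb a (mo a a))) (mb a a) = mo (mo a (mb a a)) (mb a (mo a a)) := by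
    rw [oassoc, ← interchange a a (mo a a) a, oassoc a a a, interchange a a a (mo a a),
      oassoc]
  have E4 : mo (mo a (mb (mo a a) a)) (mb a a) = mo (mo a (mb a a)) (mb (mo a a) a) := by
    rw [oassoc, ← interchange (mo a a) a a a, oassoc a a a, interchange a (mo a a) a a,
      oassoc]
  simp only [hjo, hjb, map_add, LinearMap.add_apply]
  rw [E1, E2, E3, E4]
  simp only [oassoc]
  abel
end

section
/- Let A be an associative interchange algebra over a field F of characteristic 0, with Jordan products {x,y}_∘ = x∘y + y∘x and {x,y}_• = x•y + y•x. Then for all a, b in A: {{a,a}_∘, {b,{a,{a,a}_•}_∘}_•}_• = {{b,{a,a}_∘}_•, {a,{a,a}_•}_∘}_•. -/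
/-- Identity relating the two Jordan products in an associative interchange algebra. -/
theorem stmt_6 {F : Type*} [Field F] [CharZero F]
    {A : Type*} [AddCommGroup A] [Module F A]
    (mo mb : A →ₗ[F] A →ₗ[F] A)
    (oassoc : ∀ x y z : A, mo (mo x y) z = mo x (mo y z))
    (bassoc : ∀ x y z : A, mb (mb x y) z = mb x (mb y z))
    (interchange : ∀ w x y z : A, mb (mo w x) (mo y z) = mo (mb w y) (mb x z))
    (jo jb : A → A → A)
    (hjo : ∀ x y : A, jo x y = mo x y + mo y x)
    (hjb : ∀ x y : A, jb x y = mb x y + mb y x)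
    (a b : A) :
    jb (jo a a) (jb b (jo a (jb a a))) = jb (jb b (jo a a)) (jo a (jb a a)) := by
  have key2 : mb (jo a a) (jo a (jb a a)) = mb (jo a (jb a a)) (jo a a) := by
    rw [hjo a a, hjo a (jb a a), hjb a a]
    simp only [map_add, LinearMap.add_apply, interchange, ← bassoc]
    abel
  generalize jo a (jb a a) = U at key2 ⊢
  generalize jo a a = P at key2 ⊢
  have e1 : mb P (mb U b) = mb U (mb P b) := by rw [← bassoc, key2, bassoc]
  have e2 : mb b (mb U P) = mb b (mb P U) := by rw [key2]
  simp only [hjb, map_add, LinearMap.add_apply, bassoc]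
  rw [e1, e2]
  abel
end

section
/- Let A be an associative interchange algebra over a field F of characteristic 0, with Jordan products {x,y}_∘ = x∘y + y∘x and {x,y}_• = x•y + y•x. Then for all a, b in A: {{a,a}_•, {b,{a,{a,a}_∘}_•}_∘}_∘ = {{a,{a,a}_∘}_•, {b,{a,a}_•}_∘}_∘. -/
/-- Identity relating the two Jordan products in an associative interchange algebra. -/
theorem stmt_7 {F : Type*} [Field F] [CharZero F]
    {A : Type*} [AddCommGroup A] [Module F A]
    (mo mb : A →ₗ[F] A →ₗ[F] A)
    (oassoc : ∀ x y z : A, mo (mo x y) z = mo x (mo y z))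
    (bassoc : ∀ x y z : A, mb (mb x y) z = mb x (mb y z))
    (interchange : ∀ w x y z : A, mb (mo w x) (mo y z) = mo (mb w y) (mb x z))
    (jo jb : A → A → A)
    (hjo : ∀ x y : A, jo x y = mo x y + mo y x)
    (hjb : ∀ x y : A, jb x y = mb x y + mb y x)
    (a b : A) :
    jo (jb a a) (jo b (jb a (jo a a))) = jo (jb a (jo a a)) (jo b (jb a a)) := by
  set p : A := mo a a with hp
  set q : A := mb a a with hq
  set r : A := mb a p + mb p a with hr
  -- a ∘ p = p ∘ a
  have hap : mo a p = mo p a := by rw [hp, ← oassoc]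
  -- key commutation: q ∘ r = r ∘ q
  have hcomm : mo q r = mo r q := by
    rw [hq, hr, hp]
    simp only [map_add, LinearMap.add_apply]
    rw [← interchange a a a (mo a a), ← interchange a (mo a a) a a,
        ← interchange a a (mo a a) a, ← interchange (mo a a) a a a]
    rw [← hp, hap]
  -- Jordan-type consequence of hcomm and associativity
  have key : mo q (mo b r + mo r b) + mo (mo b r + mo r b) q
      = mo r (mo b q + mo q b) + mo (mo b q + mo q b) r := by
    have e1 : mo q (mo r b) = mo r (mo q b) := by
      rw [← oassoc, hcomm, oassoc]
    have e2 : mo (mo b r) q = mo (mo b q) r := by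
      rw [oassoc, ← hcomm, ← oassoc]
    have e3 : mo q (mo b r) = mo (mo q b) r := (oassoc q b r).symm
    have e4 : mo (mo r b) q = mo r (mo b q) := oassoc r b q
    simp only [map_add, LinearMap.add_apply]
    rw [e1, e2, e3, e4]
    abel
  -- rewrite the inner doubled elements
  have h1 : jb a a = q + q := by rw [hjb, hq]
  have h3 : jb a (jo a a) = r + r := by
    rw [hjb, hjo, ← hp, hr]
    simp only [map_add, LinearMap.add_apply]
    abel
  have expand : ∀ x y : A, jo (x + x) (jo b (y + y))
      = ((mo x (mo b y + mo y b) + mo (mo b y + mo y b) x)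
          + (mo x (mo b y + mo y b) + mo (mo b y + mo y b) x))
        + ((mo x (mo b y + mo y b) + mo (mo b y + mo y b) x)
          + (mo x (mo b y + mo y b) + mo (mo b y + mo y b) x)) := by
    intro x y
    simp only [hjo, map_add, LinearMap.add_apply]
    abel
  rw [h1, h3, expand q r, expand r q, key]
end

section
/- Let A be an associative interchange algebra over a field F of characteristic 0, with Jordan products {x,y}_∘ = x∘y + y∘x and {x,y}_• = x•y + y•x. Then for all a, b in A: {{a,{a,a}_∘}_∘, {b,{a,a}_•}_∘}_• = {{b,{a,a}_∘}_•, {a,{a,a}_•}_•}_∘. -/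
/-- Identity relating the two Jordan products in an associative interchange algebra. -/
theorem stmt_8 {F : Type*} [Field F] [CharZero F]
    {A : Type*} [AddCommGroup A] [Module F A]
    (mo mb : A →ₗ[F] A →ₗ[F] A)
    (oassoc : ∀ x y z : A, mo (mo x y) z = mo x (mo y z))
    (bassoc : ∀ x y z : A, mb (mb x y) z = mb x (mb y z))
    (interchange : ∀ w x y z : A, mb (mo w x) (mo y z) = mo (mb w y) (mb x z))
    (jo jb : A → A → A)
    (hjo : ∀ x y : A, jo x y = mo x y + mo y x)
    (hjb : ∀ x y : A, jb x y = mb x y + mb y x)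
    (a b : A) :
    jb (jo a (jo a a)) (jo b (jb a a)) = jo (jb b (jo a a)) (jb a (jb a a)) := by
  have k1 : mb (mo a (mo a a)) (mo b (mb a a))
      = mo (mb (mo a a) b) (mb a (mb a a)) := by
    rw [← oassoc, interchange]
  have k2 : mb (mo a (mo a a)) (mo (mb a a) b)
      = mo (mb a (mb a a)) (mb (mo a a) b) := by
    rw [interchange]
  have k3 : mb (mo b (mb a a)) (mo a (mo a a))
      = mo (mb b (mo a a)) (mb a (mb a a)) := by
    rw [← oassoc, interchange, bassoc]
  have k4 : mb (mo (mb a a) b) (mo a (mo a a))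
      = mo (mb a (mb a a)) (mb b (mo a a)) := by
    rw [interchange, bassoc]
  simp only [hjo, hjb, map_add, LinearMap.add_apply, oassoc, bassoc, k1, k2, k3, k4]
  abel
end

section
/- Let A be an associative interchange algebra over a field F of characteristic 0, with Jordan products {x,y}_∘ = x∘y + y∘x and {x,y}_• = x•y + y•x. Then for all a, b in A: {{a,a}_•, {a,{b,{a,a}_∘}_•}_•}_∘ − {{a,a}_•, {b,{a,{a,a}_∘}_•}_•}_∘ + {{a,{a,a}_∘}_∘, {a,{a,b}_•}_∘}_• − 2·{{a,{a,a}_∘}_•, {a,{a,b}_•}_•}_∘ + {{a,{a,a}_∘}_•, {b,{a,a}_•}_•}_∘ = 0. -/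
/-- Identity relating the two Jordan products in an associative interchange algebra. -/
theorem stmt_9 {F : Type*} [Field F] [CharZero F]
    {A : Type*} [AddCommGroup A] [Module F A]
    (mo mb : A →ₗ[F] A →ₗ[F] A)
    (oassoc : ∀ x y z : A, mo (mo x y) z = mo x (mo y z))
    (bassoc : ∀ x y z : A, mb (mb x y) z = mb x (mb y z))
    (interchange : ∀ w x y z : A, mb (mo w x) (mo y z) = mo (mb w y) (mb x z))
    (jo jb : A → A → A)
    (hjo : ∀ x y : A, jo x y = mo x y + mo y x)
    (hjb : ∀ x y : A, jb x y = mb x y + mb y x)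
    (a b : A) :
    jo (jb a a) (jb a (jb b (jo a a))) - jo (jb a a) (jb b (jb a (jo a a)))
      + jb (jo a (jo a a)) (jo a (jb a b))
      - 2 • jo (jb a (jo a a)) (jb a (jb a b))
      + jo (jb a (jo a a)) (jb b (jb a a)) = 0 := by
  simp only [hjo, hjb, map_add, LinearMap.add_apply]
  simp only [oassoc, bassoc, interchange, map_add, LinearMap.add_apply]
  have e0 : (8 : ℤ) • (mb (mo a (mb a b)) (mo a (mo a a))) - (8 : ℤ) • (mb (mo a (mb a b)) (mo (mo a a) a)) = 0 := by
    rw [← oassoc a a a]; exact sub_self _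
  have e1 : (-8 : ℤ) • (mb (mo a (mb a b)) (mo a (mo a a))) - (-8 : ℤ) • (mo (mb a a) (mb (mb a b) (mo a a))) = 0 := by
    rw [interchange a (mb a b) a (mo a a)]; exact sub_self _
  have e2 : (8 : ℤ) • (mb (mo a (mb a b)) (mo (mo a a) a)) - (8 : ℤ) • (mo (mb a (mo a a)) (mb (mb a b) a)) = 0 := by
    rw [interchange a (mb a b) (mo a a) a]; exact sub_self _
  have e3 : (8 : ℤ) • (mb (mo a (mo a a)) (mo a (mb b a))) - (8 : ℤ) • (mb (mo (mo a a) a) (mo a (mb b a))) = 0 := by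
    rw [← oassoc a a a]; exact sub_self _
  have e4 : (-8 : ℤ) • (mb (mo a (mo a a)) (mo a (mb b a))) - (-8 : ℤ) • (mo (mb a a) (mb (mo a a) (mb b a))) = 0 := by
    rw [interchange a (mo a a) a (mb b a)]; exact sub_self _
  have e5 : (4 : ℤ) • (mb (mo a (mo a a)) (mo (mb a b) a)) - (4 : ℤ) • (mb (mo (mo a a) a) (mo (mb a b) a)) = 0 := by
    rw [← oassoc a a a]; exact sub_self _
  have e6 : (-4 : ℤ) • (mb (mo a (mo a a)) (mo (mb a b) a)) - (-4 : ℤ) • (mo (mb a (mb a b)) (mb (mo a a) a)) = 0 := by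
    rw [interchange a (mo a a) (mb a b) a]; exact sub_self _
  have e7 : (-4 : ℤ) • (mb (mo a (mo a a)) (mo (mb b a) a)) - (-4 : ℤ) • (mb (mo (mo a a) a) (mo (mb b a) a)) = 0 := by
    rw [← oassoc a a a]; exact sub_self _
  have e8 : (4 : ℤ) • (mb (mo a (mo a a)) (mo (mb b a) a)) - (4 : ℤ) • (mo (mb a (mb b a)) (mb (mo a a) a)) = 0 := by
    rw [interchange a (mo a a) (mb b a) a]; exact sub_self _
  have e9 : (-4 : ℤ) • (mb (mo (mb a b) a) (mo a (mo a a))) - (-4 : ℤ) • (mb (mo (mb a b) a) (mo (mo a a) a)) = 0 := by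
    rw [← oassoc a a a]; exact sub_self _
  have e10 : (4 : ℤ) • (mb (mo (mb a b) a) (mo a (mo a a))) - (4 : ℤ) • (mo (mb (mb a b) a) (mb a (mo a a))) = 0 := by
    rw [interchange (mb a b) a a (mo a a)]; exact sub_self _
  have e11 : (-4 : ℤ) • (mb (mo (mb a b) a) (mo (mo a a) a)) - (-4 : ℤ) • (mo (mb (mb a b) (mo a a)) (mb a a)) = 0 := by
    rw [interchange (mb a b) a (mo a a) a]; exact sub_self _
  have e12 : (4 : ℤ) • (mb (mo (mb b a) a) (mo a (mo a a))) - (4 : ℤ) • (mb (mo (mb b a) a) (mo (mo a a) a)) = 0 := by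
    rw [← oassoc a a a]; exact sub_self _
  have e13 : (-4 : ℤ) • (mb (mo (mb b a) a) (mo a (mo a a))) - (-4 : ℤ) • (mo (mb (mb b a) a) (mb a (mo a a))) = 0 := by
    rw [interchange (mb b a) a a (mo a a)]; exact sub_self _
  have e14 : (4 : ℤ) • (mb (mo (mb b a) a) (mo (mo a a) a)) - (4 : ℤ) • (mo (mb (mb b a) (mo a a)) (mb a a)) = 0 := by
    rw [interchange (mb b a) a (mo a a) a]; exact sub_self _
  have e15 : (8 : ℤ) • (mb (mo (mo a a) a) (mo a (mb b a))) - (8 : ℤ) • (mo (mb (mo a a) a) (mb a (mb b a))) = 0 := by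
    rw [interchange (mo a a) a a (mb b a)]; exact sub_self _
  have e16 : (4 : ℤ) • (mb (mo (mo a a) a) (mo (mb a b) a)) - (4 : ℤ) • (mo (mb (mo a a) (mb a b)) (mb a a)) = 0 := by
    rw [interchange (mo a a) a (mb a b) a]; exact sub_self _
  have e17 : (-4 : ℤ) • (mb (mo (mo a a) a) (mo (mb b a) a)) - (-4 : ℤ) • (mo (mb (mo a a) (mb b a)) (mb a a)) = 0 := by
    rw [interchange (mo a a) a (mb b a) a]; exact sub_self _
  have e18 : (8 : ℤ) • (mo (mb a a) (mb a (mb b (mo a a)))) - (8 : ℤ) • (mo (mb a a) (mb (mb a b) (mo a a))) = 0 := by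
    rw [← bassoc a b (mo a a)]; exact sub_self _
  have e19 : (-4 : ℤ) • (mo (mb a (mb b a)) (mb a (mo a a))) - (-4 : ℤ) • (mo (mb (mb a b) a) (mb a (mo a a))) = 0 := by
    rw [← bassoc a b a]; exact sub_self _
  have e20 : (4 : ℤ) • (mo (mb a (mb b (mo a a))) (mb a a)) - (4 : ℤ) • (mo (mb (mb a b) (mo a a)) (mb a a)) = 0 := by
    rw [← bassoc a b (mo a a)]; exact sub_self _
  have e21 : (-8 : ℤ) • (mo (mb a (mo a a)) (mb a (mb b a))) - (-8 : ℤ) • (mo (mb a (mo a a)) (mb (mb a b) a)) = 0 := by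
    rw [← bassoc a b a]; exact sub_self _
  have e22 : (4 : ℤ) • (mo (mb b (mb a a)) (mb a (mo a a))) - (4 : ℤ) • (mo (mb (mb b a) a) (mb a (mo a a))) = 0 := by
    rw [← bassoc b a a]; exact sub_self _
  have e23 : (-4 : ℤ) • (mo (mb b (mb a (mo a a))) (mb a a)) - (-4 : ℤ) • (mo (mb (mb b a) (mo a a)) (mb a a)) = 0 := by
    rw [← bassoc b a (mo a a)]; exact sub_self _
  have key : ((8 : ℤ) • (mb (mo a (mb a b)) (mo a (mo a a))) - (8 : ℤ) • (mb (mo a (mb a b)) (mo (mo a a) a))) +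
      ((-8 : ℤ) • (mb (mo a (mb a b)) (mo a (mo a a))) - (-8 : ℤ) • (mo (mb a a) (mb (mb a b) (mo a a)))) +
      ((8 : ℤ) • (mb (mo a (mb a b)) (mo (mo a a) a)) - (8 : ℤ) • (mo (mb a (mo a a)) (mb (mb a b) a))) +
      ((8 : ℤ) • (mb (mo a (mo a a)) (mo a (mb b a))) - (8 : ℤ) • (mb (mo (mo a a) a) (mo a (mb b a)))) +
      ((-8 : ℤ) • (mb (mo a (mo a a)) (mo a (mb b a))) - (-8 : ℤ) • (mo (mb a a) (mb (mo a a) (mb b a)))) +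
      ((4 : ℤ) • (mb (mo a (mo a a)) (mo (mb a b) a)) - (4 : ℤ) • (mb (mo (mo a a) a) (mo (mb a b) a))) +
      ((-4 : ℤ) • (mb (mo a (mo a a)) (mo (mb a b) a)) - (-4 : ℤ) • (mo (mb a (mb a b)) (mb (mo a a) a))) +
      ((-4 : ℤ) • (mb (mo a (mo a a)) (mo (mb b a) a)) - (-4 : ℤ) • (mb (mo (mo a a) a) (mo (mb b a) a))) +
      ((4 : ℤ) • (mb (mo a (mo a a)) (mo (mb b a) a)) - (4 : ℤ) • (mo (mb a (mb b a)) (mb (mo a a) a))) +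
      ((-4 : ℤ) • (mb (mo (mb a b) a) (mo a (mo a a))) - (-4 : ℤ) • (mb (mo (mb a b) a) (mo (mo a a) a))) +
      ((4 : ℤ) • (mb (mo (mb a b) a) (mo a (mo a a))) - (4 : ℤ) • (mo (mb (mb a b) a) (mb a (mo a a)))) +
      ((-4 : ℤ) • (mb (mo (mb a b) a) (mo (mo a a) a)) - (-4 : ℤ) • (mo (mb (mb a b) (mo a a)) (mb a a))) +
      ((4 : ℤ) • (mb (mo (mb b a) a) (mo a (mo a a))) - (4 : ℤ) • (mb (mo (mb b a) a) (mo (mo a a) a))) +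
      ((-4 : ℤ) • (mb (mo (mb b a) a) (mo a (mo a a))) - (-4 : ℤ) • (mo (mb (mb b a) a) (mb a (mo a a)))) +
      ((4 : ℤ) • (mb (mo (mb b a) a) (mo (mo a a) a)) - (4 : ℤ) • (mo (mb (mb b a) (mo a a)) (mb a a))) +
      ((8 : ℤ) • (mb (mo (mo a a) a) (mo a (mb b a))) - (8 : ℤ) • (mo (mb (mo a a) a) (mb a (mb b a)))) +
      ((4 : ℤ) • (mb (mo (mo a a) a) (mo (mb a b) a)) - (4 : ℤ) • (mo (mb (mo a a) (mb a b)) (mb a a))) +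
      ((-4 : ℤ) • (mb (mo (mo a a) a) (mo (mb b a) a)) - (-4 : ℤ) • (mo (mb (mo a a) (mb b a)) (mb a a))) +
      ((8 : ℤ) • (mo (mb a a) (mb a (mb b (mo a a)))) - (8 : ℤ) • (mo (mb a a) (mb (mb a b) (mo a a)))) +
      ((-4 : ℤ) • (mo (mb a (mb b a)) (mb a (mo a a))) - (-4 : ℤ) • (mo (mb (mb a b) a) (mb a (mo a a)))) +
      ((4 : ℤ) • (mo (mb a (mb b (mo a a))) (mb a a)) - (4 : ℤ) • (mo (mb (mb a b) (mo a a)) (mb a a))) +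
      ((-8 : ℤ) • (mo (mb a (mo a a)) (mb a (mb b a))) - (-8 : ℤ) • (mo (mb a (mo a a)) (mb (mb a b) a))) +
      ((4 : ℤ) • (mo (mb b (mb a a)) (mb a (mo a a))) - (4 : ℤ) • (mo (mb (mb b a) a) (mb a (mo a a)))) +
      ((-4 : ℤ) • (mo (mb b (mb a (mo a a))) (mb a a)) - (-4 : ℤ) • (mo (mb (mb b a) (mo a a)) (mb a a))) = (0 : A) := by
    rw [e0, e1, e2, e3, e4, e5, e6, e7, e8, e9, e10, e11, e12, e13, e14, e15, e16, e17, e18, e19, e20, e21, e22, e23]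
    simp
  rw [← key]
  abel
end

section
/- Let A be an associative interchange algebra over a field F of characteristic 0, with Jordan products {x,y}_∘ = x∘y + y∘x and {x,y}_• = x•y + y•x. Then for all a, b in A: 2·{{a,a}_∘, {{a,b}_∘,{a,b}_∘}_•}_• − {{a,{a,a}_•}_•, {a,{b,b}_•}_•}_∘ − 2·{{a,{a,b}_•}_•, {b,{a,a}_•}_•}_∘ + {{b,{a,a}_•}_•, {b,{a,a}_•}_•}_∘ = 0. -/
/-- Identity relating the two Jordan products in an associative interchange algebra. -/
theorem stmt_10 {F : Type*} [Field F] [CharZero F]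
    {A : Type*} [AddCommGroup A] [Module F A]
    (mo mb : A →ₗ[F] A →ₗ[F] A)
    (oassoc : ∀ x y z : A, mo (mo x y) z = mo x (mo y z))
    (bassoc : ∀ x y z : A, mb (mb x y) z = mb x (mb y z))
    (interchange : ∀ w x y z : A, mb (mo w x) (mo y z) = mo (mb w y) (mb x z))
    (jo jb : A → A → A)
    (hjo : ∀ x y : A, jo x y = mo x y + mo y x)
    (hjb : ∀ x y : A, jb x y = mb x y + mb y x)
    (a b : A) :
    2 • jb (jo a a) (jb (jo a b) (jo a b))
      - jo (jb a (jb a a)) (jb a (jb b b))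
      - 2 • jo (jb a (jb a b)) (jb b (jb a a))
      + jo (jb b (jb a a)) (jb b (jb a a)) = 0 := by
  simp only [hjo, hjb, map_add, LinearMap.add_apply, interchange, bassoc, oassoc, two_smul]
  abel
end

section
/- Let A be an associative interchange algebra over a field F of characteristic 0, with Jordan products {x,y}_∘ = x∘y + y∘x and {x,y}_• = x•y + y•x. Then for all a, b in A: 2·{{a,a}_•, {{a,b}_•,{a,b}_•}_∘}_∘ − {{a,{a,a}_∘}_∘, {a,{b,b}_∘}_∘}_• − 2·{{a,{a,b}_∘}_∘, {b,{a,a}_∘}_∘}_• + {{b,{a,a}_∘}_∘, {b,{a,a}_∘}_∘}_• = 0. -/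
/-- Identity relating the two Jordan products in an associative interchange algebra. -/
theorem stmt_11 {F : Type*} [Field F] [CharZero F]
    {A : Type*} [AddCommGroup A] [Module F A]
    (mo mb : A →ₗ[F] A →ₗ[F] A)
    (oassoc : ∀ x y z : A, mo (mo x y) z = mo x (mo y z))
    (bassoc : ∀ x y z : A, mb (mb x y) z = mb x (mb y z))
    (interchange : ∀ w x y z : A, mb (mo w x) (mo y z) = mo (mb w y) (mb x z))
    (jo jb : A → A → A)
    (hjo : ∀ x y : A, jo x y = mo x y + mo y x)
    (hjb : ∀ x y : A, jb x y = mb x y + mb y x)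
    (a b : A) :
    2 • jo (jb a a) (jo (jb a b) (jb a b))
      - jb (jo a (jo a a)) (jo a (jo b b))
      - 2 • jb (jo a (jo a b)) (jo b (jo a a))
      + jb (jo b (jo a a)) (jo b (jo a a)) = 0 := by
  simp only [hjo, hjb, map_add, LinearMap.add_apply, smul_add, two_smul]
  simp only [← interchange, oassoc]
  abel
end

section
/- Let A be an associative interchange algebra over a field F of characteristic 0, with Jordan products {x,y}_∘ = x∘y + y∘x and {x,y}_• = x•y + y•x. Then for all a, b in A: 2·{{a,b}_•, {{b,b}_∘,{a,a}_•}_•}_∘ − 2·{{a,{b,b}_∘}_∘, {b,{a,a}_•}_∘}_• − {{b,{b,b}_∘}_∘, {a,{a,a}_•}_∘}_• + {{b,{b,b}_∘}_•, {a,{a,a}_•}_•}_∘ = 0. -/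
/-- Identity relating the two Jordan products in an associative interchange algebra. -/
theorem stmt_12 {F : Type*} [Field F] [CharZero F]
    {A : Type*} [AddCommGroup A] [Module F A]
    (mo mb : A →ₗ[F] A →ₗ[F] A)
    (oassoc : ∀ x y z : A, mo (mo x y) z = mo x (mo y z))
    (bassoc : ∀ x y z : A, mb (mb x y) z = mb x (mb y z))
    (interchange : ∀ w x y z : A, mb (mo w x) (mo y z) = mo (mb w y) (mb x z))
    (jo jb : A → A → A)
    (hjo : ∀ x y : A, jo x y = mo x y + mo y x)
    (hjb : ∀ x y : A, jb x y = mb x y + mb y x)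
    (a b : A) :
    2 • jo (jb a b) (jb (jo b b) (jb a a))
      - 2 • jb (jo a (jo b b)) (jo b (jb a a))
      - jb (jo b (jo b b)) (jo a (jb a a))
      + jo (jb b (jo b b)) (jb a (jb a a)) = 0 := by
  have e1 : (mo (mb (mo b b) (mb a a)) (mb a b)) = (mo (mb b (mb a a)) (mb (mo b a) b)) := by
    rw [← interchange (mo b b) a (mb a a) b, oassoc b b a, interchange b (mo b a) (mb a a) b]
  have e2 : (mo (mb a (mb a (mo b b))) (mb a b)) = (mo (mb a (mb a b)) (mb a (mo b b))) := by
    rw [← bassoc a a (mo b b), ← interchange (mb a a) a (mo b b) b, oassoc b b b,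
      interchange (mb a a) a b (mo b b), bassoc a a b]
  have e3 : (mo (mb (mo b b) (mb a a)) (mb b a)) = (mo (mb b (mb a a)) (mb (mo b b) a)) := by
    rw [← interchange (mo b b) b (mb a a) a, oassoc b b b, interchange b (mo b b) (mb a a) a]
  have e4 : (mo (mb a (mb a (mo b b))) (mb b a)) = (mo (mb a (mb a b)) (mb b (mo b a))) := by
    rw [← bassoc a a (mo b b), ← interchange (mb a a) b (mo b b) a, oassoc b b a,
      interchange (mb a a) b b (mo b a), bassoc a a b]
  have e5 : (mo (mb b b) (mb (mo b a) (mb a a))) = (mo (mb (mo b b) b) (mb a (mb a a))) := by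
    rw [← interchange b (mo b a) b (mb a a), ← oassoc b b a, interchange (mo b b) a b (mb a a)]
  have e6 : (mo (mb b b) (mb a (mb a (mo b a)))) = (mo (mb b (mo b b)) (mb a (mb a a))) := by
    rw [← bassoc a a (mo b a), ← interchange b (mb a a) b (mo b a), ← oassoc b b a,
      interchange b (mb a a) (mo b b) a, bassoc a a a]
  simp only [hjo, hjb, map_add, LinearMap.add_apply, interchange, oassoc, bassoc]
  rw [e1, e2, e3, e4, e5, e6]
  abel
end

section
/- Let A be an associative interchange algebra over a field F of characteristic 0, with Lie bracket [x,y] = x∘y − y∘x and Jordan product {x,y} = x•y + y•x. Then for all a, b, c, d, e, f, g in A the following alternating sum over all 5040 permutations σ of the ordered list (a,b,c,d,e,f,g), with sign ε(σ), vanishes: Σ_σ ε(σ) [ {a^σ, [b^σ, c^σ]}, {[d^σ, e^σ], [f^σ, g^σ]} ] = 0, where (a^σ,...,g^σ) denotes the image of (a,...,g) under σ. -/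
section Aux

variable {F : Type*} [Field F] {A : Type*} [AddCommGroup A] [Module F A]

/-- auxiliary monomial pattern: (x∘(y∘z)) • ([s1,s2]∘[s3,s4]) -/
def auxMM (mo mb : A →ₗ[F] A →ₗ[F] A) (w : Fin 7 → A) : A :=
  mb (mo (w 0) (mo (w 1) (w 2)))
    (mo (mo (w 3) (w 4) - mo (w 4) (w 3)) (mo (w 5) (w 6) - mo (w 6) (w 5)))

/-- auxiliary monomial pattern: ([s1,s2]∘[s3,s4]) • (x∘(y∘z)) -/
def auxNN (mo mb : A →ₗ[F] A →ₗ[F] A) (w : Fin 7 → A) : A :=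
  mb (mo (mo (w 0) (w 1) - mo (w 1) (w 0)) (mo (w 2) (w 3) - mo (w 3) (w 2)))
    (mo (w 4) (mo (w 5) (w 6)))

end Aux
def auxPM1 : Equiv.Perm (Fin 7) := ⟨![0,3,4,1,2,5,6], ![0,3,4,1,2,5,6], by decide, by decide⟩
def auxPM2 : Equiv.Perm (Fin 7) := ⟨![0,4,3,1,2,5,6], ![0,3,4,2,1,5,6], by decide, by decide⟩
def auxPM3 : Equiv.Perm (Fin 7) := ⟨![0,5,6,1,2,3,4], ![0,3,4,5,6,1,2], by decide, by decide⟩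
def auxPM4 : Equiv.Perm (Fin 7) := ⟨![0,6,5,1,2,3,4], ![0,3,4,5,6,2,1], by decide, by decide⟩
def auxPM5 : Equiv.Perm (Fin 7) := ⟨![3,4,0,5,6,1,2], ![2,5,6,0,1,3,4], by decide, by decide⟩
def auxPM6 : Equiv.Perm (Fin 7) := ⟨![4,3,0,5,6,1,2], ![2,5,6,1,0,3,4], by decide, by decide⟩
def auxPM7 : Equiv.Perm (Fin 7) := ⟨![5,6,0,3,4,1,2], ![2,5,6,3,4,0,1], by decide, by decide⟩
def auxPM8 : Equiv.Perm (Fin 7) := ⟨![6,5,0,3,4,1,2], ![2,5,6,3,4,1,0], by decide, by decide⟩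
def auxPN1 : Equiv.Perm (Fin 7) := ⟨![1,2,3,4,0,5,6], ![4,0,1,2,3,5,6], by decide, by decide⟩
def auxPN2 : Equiv.Perm (Fin 7) := ⟨![1,2,3,4,0,6,5], ![4,0,1,2,3,6,5], by decide, by decide⟩
def auxPN3 : Equiv.Perm (Fin 7) := ⟨![1,2,5,6,0,3,4], ![4,0,1,5,6,2,3], by decide, by decide⟩
def auxPN4 : Equiv.Perm (Fin 7) := ⟨![1,2,5,6,0,4,3], ![4,0,1,6,5,2,3], by decide, by decide⟩
def auxPN5 : Equiv.Perm (Fin 7) := ⟨![3,4,1,2,5,6,0], ![6,2,3,0,1,4,5], by decide, by decide⟩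
def auxPN6 : Equiv.Perm (Fin 7) := ⟨![3,4,1,2,6,5,0], ![6,2,3,0,1,5,4], by decide, by decide⟩
def auxPN7 : Equiv.Perm (Fin 7) := ⟨![5,6,1,2,3,4,0], ![6,2,3,4,5,0,1], by decide, by decide⟩
def auxPN8 : Equiv.Perm (Fin 7) := ⟨![5,6,1,2,4,3,0], ![6,2,3,5,4,0,1], by decide, by decide⟩

lemma auxPM1_0 : auxPM1 0 = 0 := by decide
lemma auxPM1_1 : auxPM1 1 = 3 := by decide
lemma auxPM1_2 : auxPM1 2 = 4 := by decide
lemma auxPM1_3 : auxPM1 3 = 1 := by decide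
lemma auxPM1_4 : auxPM1 4 = 2 := by decide
lemma auxPM1_5 : auxPM1 5 = 5 := by decide
lemma auxPM1_6 : auxPM1 6 = 6 := by decide
lemma auxPM2_0 : auxPM2 0 = 0 := by decide
lemma auxPM2_1 : auxPM2 1 = 4 := by decide
lemma auxPM2_2 : auxPM2 2 = 3 := by decide
lemma auxPM2_3 : auxPM2 3 = 1 := by decide
lemma auxPM2_4 : auxPM2 4 = 2 := by decide
lemma auxPM2_5 : auxPM2 5 = 5 := by decide
lemma auxPM2_6 : auxPM2 6 = 6 := by decide
lemma auxPM3_0 : auxPM3 0 = 0 := by decide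
lemma auxPM3_1 : auxPM3 1 = 5 := by decide
lemma auxPM3_2 : auxPM3 2 = 6 := by decide
lemma auxPM3_3 : auxPM3 3 = 1 := by decide
lemma auxPM3_4 : auxPM3 4 = 2 := by decide
lemma auxPM3_5 : auxPM3 5 = 3 := by decide
lemma auxPM3_6 : auxPM3 6 = 4 := by decide
lemma auxPM4_0 : auxPM4 0 = 0 := by decide
lemma auxPM4_1 : auxPM4 1 = 6 := by decide
lemma auxPM4_2 : auxPM4 2 = 5 := by decide
lemma auxPM4_3 : auxPM4 3 = 1 := by decide
lemma auxPM4_4 : auxPM4 4 = 2 := by decide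
lemma auxPM4_5 : auxPM4 5 = 3 := by decide
lemma auxPM4_6 : auxPM4 6 = 4 := by decide
lemma auxPM5_0 : auxPM5 0 = 3 := by decide
lemma auxPM5_1 : auxPM5 1 = 4 := by decide
lemma auxPM5_2 : auxPM5 2 = 0 := by decide
lemma auxPM5_3 : auxPM5 3 = 5 := by decide
lemma auxPM5_4 : auxPM5 4 = 6 := by decide
lemma auxPM5_5 : auxPM5 5 = 1 := by decide
lemma auxPM5_6 : auxPM5 6 = 2 := by decide
lemma auxPM6_0 : auxPM6 0 = 4 := by decide
lemma auxPM6_1 : auxPM6 1 = 3 := by decide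
lemma auxPM6_2 : auxPM6 2 = 0 := by decide
lemma auxPM6_3 : auxPM6 3 = 5 := by decide
lemma auxPM6_4 : auxPM6 4 = 6 := by decide
lemma auxPM6_5 : auxPM6 5 = 1 := by decide
lemma auxPM6_6 : auxPM6 6 = 2 := by decide
lemma auxPM7_0 : auxPM7 0 = 5 := by decide
lemma auxPM7_1 : auxPM7 1 = 6 := by decide
lemma auxPM7_2 : auxPM7 2 = 0 := by decide
lemma auxPM7_3 : auxPM7 3 = 3 := by decide
lemma auxPM7_4 : auxPM7 4 = 4 := by decide
lemma auxPM7_5 : auxPM7 5 = 1 := by decide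
lemma auxPM7_6 : auxPM7 6 = 2 := by decide
lemma auxPM8_0 : auxPM8 0 = 6 := by decide
lemma auxPM8_1 : auxPM8 1 = 5 := by decide
lemma auxPM8_2 : auxPM8 2 = 0 := by decide
lemma auxPM8_3 : auxPM8 3 = 3 := by decide
lemma auxPM8_4 : auxPM8 4 = 4 := by decide
lemma auxPM8_5 : auxPM8 5 = 1 := by decide
lemma auxPM8_6 : auxPM8 6 = 2 := by decide
lemma auxPN1_0 : auxPN1 0 = 1 := by decide
lemma auxPN1_1 : auxPN1 1 = 2 := by decide
lemma auxPN1_2 : auxPN1 2 = 3 := by decide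
lemma auxPN1_3 : auxPN1 3 = 4 := by decide
lemma auxPN1_4 : auxPN1 4 = 0 := by decide
lemma auxPN1_5 : auxPN1 5 = 5 := by decide
lemma auxPN1_6 : auxPN1 6 = 6 := by decide
lemma auxPN2_0 : auxPN2 0 = 1 := by decide
lemma auxPN2_1 : auxPN2 1 = 2 := by decide
lemma auxPN2_2 : auxPN2 2 = 3 := by decide
lemma auxPN2_3 : auxPN2 3 = 4 := by decide
lemma auxPN2_4 : auxPN2 4 = 0 := by decide
lemma auxPN2_5 : auxPN2 5 = 6 := by decide
lemma auxPN2_6 : auxPN2 6 = 5 := by decide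
lemma auxPN3_0 : auxPN3 0 = 1 := by decide
lemma auxPN3_1 : auxPN3 1 = 2 := by decide
lemma auxPN3_2 : auxPN3 2 = 5 := by decide
lemma auxPN3_3 : auxPN3 3 = 6 := by decide
lemma auxPN3_4 : auxPN3 4 = 0 := by decide
lemma auxPN3_5 : auxPN3 5 = 3 := by decide
lemma auxPN3_6 : auxPN3 6 = 4 := by decide
lemma auxPN4_0 : auxPN4 0 = 1 := by decide
lemma auxPN4_1 : auxPN4 1 = 2 := by decide
lemma auxPN4_2 : auxPN4 2 = 5 := by decide
lemma auxPN4_3 : auxPN4 3 = 6 := by decide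
lemma auxPN4_4 : auxPN4 4 = 0 := by decide
lemma auxPN4_5 : auxPN4 5 = 4 := by decide
lemma auxPN4_6 : auxPN4 6 = 3 := by decide
lemma auxPN5_0 : auxPN5 0 = 3 := by decide
lemma auxPN5_1 : auxPN5 1 = 4 := by decide
lemma auxPN5_2 : auxPN5 2 = 1 := by decide
lemma auxPN5_3 : auxPN5 3 = 2 := by decide
lemma auxPN5_4 : auxPN5 4 = 5 := by decide
lemma auxPN5_5 : auxPN5 5 = 6 := by decide
lemma auxPN5_6 : auxPN5 6 = 0 := by decide
lemma auxPN6_0 : auxPN6 0 = 3 := by decide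
lemma auxPN6_1 : auxPN6 1 = 4 := by decide
lemma auxPN6_2 : auxPN6 2 = 1 := by decide
lemma auxPN6_3 : auxPN6 3 = 2 := by decide
lemma auxPN6_4 : auxPN6 4 = 6 := by decide
lemma auxPN6_5 : auxPN6 5 = 5 := by decide
lemma auxPN6_6 : auxPN6 6 = 0 := by decide
lemma auxPN7_0 : auxPN7 0 = 5 := by decide
lemma auxPN7_1 : auxPN7 1 = 6 := by decide
lemma auxPN7_2 : auxPN7 2 = 1 := by decide
lemma auxPN7_3 : auxPN7 3 = 2 := by decide
lemma auxPN7_4 : auxPN7 4 = 3 := by decide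
lemma auxPN7_5 : auxPN7 5 = 4 := by decide
lemma auxPN7_6 : auxPN7 6 = 0 := by decide
lemma auxPN8_0 : auxPN8 0 = 5 := by decide
lemma auxPN8_1 : auxPN8 1 = 6 := by decide
lemma auxPN8_2 : auxPN8 2 = 1 := by decide
lemma auxPN8_3 : auxPN8 3 = 2 := by decide
lemma auxPN8_4 : auxPN8 4 = 4 := by decide
lemma auxPN8_5 : auxPN8 5 = 3 := by decide
lemma auxPN8_6 : auxPN8 6 = 0 := by decide


/-- New degree-7 Lie-Jordan identity in an associative interchange algebra:
an alternating sum over all 5040 permutations of (a,b,c,d,e,f,g), where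
`l` is the Lie bracket of `∘` and `j` is the Jordan product of `•`. -/
theorem stmt_15 {F : Type*} [Field F] [CharZero F]
    {A : Type*} [AddCommGroup A] [Module F A]
    (mo mb : A →ₗ[F] A →ₗ[F] A)
    (oassoc : ∀ x y z : A, mo (mo x y) z = mo x (mo y z))
    (bassoc : ∀ x y z : A, mb (mb x y) z = mb x (mb y z))
    (interchange : ∀ w x y z : A, mb (mo w x) (mo y z) = mo (mb w y) (mb x z))
    (l j : A → A → A)
    (hl : ∀ x y : A, l x y = mo x y - mo y x)
    (hj : ∀ x y : A, j x y = mb x y + mb y x)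
    (a b c d e f g : A) (v : Fin 7 → A) (hv : v = ![a, b, c, d, e, f, g]) :
    ∑ σ : Equiv.Perm (Fin 7),
      (Equiv.Perm.sign σ : ℤ) •
        l (j (v (σ 0)) (l (v (σ 1)) (v (σ 2))))
          (j (l (v (σ 3)) (v (σ 4))) (l (v (σ 5)) (v (σ 6))))
      = 0 := by
  clear hv
  -- reindexing lemma
  have reindex : ∀ (f : (Fin 7 → A) → A) (τ : Equiv.Perm (Fin 7)),
      (∑ σ : Equiv.Perm (Fin 7), (Equiv.Perm.sign σ : ℤ) • f (fun i => v (σ (τ i))))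
        = (Equiv.Perm.sign τ : ℤ) •
          ∑ σ : Equiv.Perm (Fin 7), (Equiv.Perm.sign σ : ℤ) • f (fun i => v (σ i)) := by
    intro f τ
    rw [Finset.smul_sum]
    rw [← Equiv.sum_comp (Equiv.mulRight τ)
        (fun ρ => (Equiv.Perm.sign τ : ℤ) • ((Equiv.Perm.sign ρ : ℤ) • f (fun i => v (ρ i))))]
    refine Finset.sum_congr rfl fun σ _ => ?_
    have h : (Equiv.Perm.sign (σ * τ) : ℤ)
        = (Equiv.Perm.sign σ : ℤ) * (Equiv.Perm.sign τ : ℤ) := by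
      rw [map_mul]; push_cast; ring
    simp only [Equiv.coe_mulRight, h, smul_smul, Equiv.Perm.mul_apply]
    congr 1
    rcases Int.units_eq_one_or (Equiv.Perm.sign τ) with hτ | hτ <;>
      rw [hτ] <;> push_cast <;> ring
  -- the pointwise identity coming from interchange and associativity
  have key : ∀ w : Fin 7 → A,
      l (j (w 0) (l (w 1) (w 2))) (j (l (w 3) (w 4)) (l (w 5) (w 6)))
        = auxMM mo mb (fun i => w (auxPM1 i)) - auxMM mo mb (fun i => w (auxPM2 i)) + auxMM mo mb (fun i => w (auxPM3 i)) - auxMM mo mb (fun i => w (auxPM4 i)) - auxMM mo mb (fun i => w (auxPM5 i)) + auxMM mo mb (fun i => w (auxPM6 i)) - auxMM mo mb (fun i => w (auxPM7 i)) + auxMM mo mb (fun i => w (auxPM8 i)) + auxNN mo mb (fun i => w (auxPN1 i)) - auxNN mo mb (fun i => w (auxPN2 i)) + auxNN mo mb (fun i => w (auxPN3 i)) - auxNN mo mb (fun i => w (auxPN4 i)) - auxNN mo mb (fun i => w (auxPN5 i)) + auxNN mo mb (fun i => w (auxPN6 i)) - auxNN mo mb (fun i => w (auxPN7 i)) + auxNN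 mo mb (fun i => w (auxPN8 i)) := by
    intro w
    simp only [auxMM, auxNN, auxPM1_0, auxPM1_1, auxPM1_2, auxPM1_3, auxPM1_4, auxPM1_5, auxPM1_6, auxPM2_0, auxPM2_1, auxPM2_2, auxPM2_3, auxPM2_4, auxPM2_5, auxPM2_6, auxPM3_0, auxPM3_1, auxPM3_2, auxPM3_3, auxPM3_4, auxPM3_5, auxPM3_6, auxPM4_0, auxPM4_1, auxPM4_2, auxPM4_3, auxPM4_4, auxPM4_5, auxPM4_6, auxPM5_0, auxPM5_1, auxPM5_2, auxPM5_3, auxPM5_4, auxPM5_5, auxPM5_6, auxPM6_0, auxPM6_1, auxPM6_2, auxPM6_3, auxPM6_4, auxPM6_5, auxPM6_6, auxPM7_0, auxPM7_1, auxPM7_2, auxPM7_3, auxPM7_4, auxPM7_5, auxPM7_6, auxPM8_0, auxPM8_1, auxPM8_2, auxPM8_3, auxPM8_4, auxPM8_5, auxPM8_6, auxPN1_0, auxPN1_1, auxPN1_2, auxPN1_3, auxPN1_4, auxPN1_5, auxPN1_6, auxPN2_0, auxPN2_1, auxPN2_2, auxPN2_3, auxPN2_4, auxPN2_5, auxPN2_6,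 auxPN3_0, auxPN3_1, auxPN3_2, auxPN3_3, auxPN3_4, auxPN3_5, auxPN3_6, auxPN4_0, auxPN4_1, auxPN4_2, auxPN4_3, auxPN4_4, auxPN4_5, auxPN4_6, auxPN5_0, auxPN5_1, auxPN5_2, auxPN5_3, auxPN5_4, auxPN5_5, auxPN5_6, auxPN6_0, auxPN6_1, auxPN6_2, auxPN6_3, auxPN6_4, auxPN6_5, auxPN6_6, auxPN7_0, auxPN7_1, auxPN7_2, auxPN7_3, auxPN7_4, auxPN7_5, auxPN7_6, auxPN8_0, auxPN8_1, auxPN8_2, auxPN8_3, auxPN8_4, auxPN8_5, auxPN8_6, hl, hj, map_add, map_sub,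
      LinearMap.add_apply, LinearMap.sub_apply, ← interchange, oassoc]
    abel
  have step1 : (∑ σ : Equiv.Perm (Fin 7),
      (Equiv.Perm.sign σ : ℤ) •
        l (j (v (σ 0)) (l (v (σ 1)) (v (σ 2))))
          (j (l (v (σ 3)) (v (σ 4))) (l (v (σ 5)) (v (σ 6)))))
      = ∑ σ : Equiv.Perm (Fin 7), (Equiv.Perm.sign σ : ℤ) • (auxMM mo mb (fun i => v (σ (auxPM1 i))) - auxMM mo mb (fun i => v (σ (auxPM2 i))) + auxMM mo mb (fun i => v (σ (auxPM3 i))) - auxMM mo mb (fun i => v (σ (auxPM4 i))) - auxMM mo mb (fun i => v (σ (auxPM5 i))) + auxMM mo mb (fun i => v (σ (auxPM6 i))) - auxMM mo mb (fun i => v (σ (auxPM7 i))) + auxMM mo mb (fun i => v (σ (auxPM8 i))) + auxNN mo mb (fun i => v (σ (auxPN1 i))) - auxNN mo mb (fun i => v (σ (auxPN2 i))) + auxNN mo mb (fun i => v (σ (auxPN3 i))) - auxNN mo mb (fun i => v (σ (auxPN4 i))) - auxNN mo mb (fun i => v (σ (auxPN5 i))) + auxNN mo mb (fun i => v (σ (auxPN6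 i))) - auxNN mo mb (fun i => v (σ (auxPN7 i))) + auxNN mo mb (fun i => v (σ (auxPN8 i)))) :=
    Finset.sum_congr rfl fun σ _ =>
      congrArg (fun t => (Equiv.Perm.sign σ : ℤ) • t) (key fun i => v (σ i))
  rw [step1]
  simp only [smul_add, smul_sub, Finset.sum_add_distrib, Finset.sum_sub_distrib]
  rw [reindex (auxMM mo mb) auxPM1, reindex (auxMM mo mb) auxPM2, reindex (auxMM mo mb) auxPM3, reindex (auxMM mo mb) auxPM4, reindex (auxMM mo mb) auxPM5, reindex (auxMM mo mb) auxPM6, reindex (auxMM mo mb) auxPM7, reindex (auxMM mo mb) auxPM8, reindex (auxNN mo mb) auxPN1, reindex (auxNN mo mb) auxPN2, reindex (auxNN mo mb) auxPN3, reindex (auxNN mo mb) auxPN4, reindex (auxNN mo mb) auxPN5, reindex (auxNN mo mb) auxPN6, reindex (auxNN mo mb) auxPN7, reindex (auxNN mo mb) auxPN8]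
  have s_auxPM1 : (Equiv.Perm.sign auxPM1 : ℤ) = 1 := by decide
  have s_auxPM2 : (Equiv.Perm.sign auxPM2 : ℤ) = -1 := by decide
  have s_auxPM3 : (Equiv.Perm.sign auxPM3 : ℤ) = 1 := by decide
  have s_auxPM4 : (Equiv.Perm.sign auxPM4 : ℤ) = -1 := by decide
  have s_auxPM5 : (Equiv.Perm.sign auxPM5 : ℤ) = 1 := by decide
  have s_auxPM6 : (Equiv.Perm.sign auxPM6 : ℤ) = -1 := by decide
  have s_auxPM7 : (Equiv.Perm.sign auxPM7 : ℤ) = 1 := by decide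
  have s_auxPM8 : (Equiv.Perm.sign auxPM8 : ℤ) = -1 := by decide
  have s_auxPN1 : (Equiv.Perm.sign auxPN1 : ℤ) = 1 := by decide
  have s_auxPN2 : (Equiv.Perm.sign auxPN2 : ℤ) = -1 := by decide
  have s_auxPN3 : (Equiv.Perm.sign auxPN3 : ℤ) = 1 := by decide
  have s_auxPN4 : (Equiv.Perm.sign auxPN4 : ℤ) = -1 := by decide
  have s_auxPN5 : (Equiv.Perm.sign auxPN5 : ℤ) = 1 := by decide
  have s_auxPN6 : (Equiv.Perm.sign auxPN6 : ℤ) = -1 := by decide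
  have s_auxPN7 : (Equiv.Perm.sign auxPN7 : ℤ) = 1 := by decide
  have s_auxPN8 : (Equiv.Perm.sign auxPN8 : ℤ) = -1 := by decide
  rw [s_auxPM1, s_auxPM2, s_auxPM3, s_auxPM4, s_auxPM5, s_auxPM6, s_auxPM7, s_auxPM8, s_auxPN1, s_auxPN2, s_auxPN3, s_auxPN4, s_auxPN5, s_auxPN6, s_auxPN7, s_auxPN8]
  simp only [one_smul, neg_smul, neg_neg]
  abel
end

section
/- Let A be an associative interchange algebra over a field F of characteristic 0, with Lie bracket [x,y] = x∘y − y∘x and Jordan product {x,y} = x•y + y•x, and Jordan powers a² = {a,a}, a³ = {a,a²}. Then for all a, b in A: {[a,b], [a²,a³]} − {[a,a²], [b,a³]} + {[b,a²], [a,a³]} = 0. -/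
/-- New Lie-Jordan identity in an associative interchange algebra, where `l` is the
Lie bracket of `∘`, `j` is the Jordan product of `•`, and `a2`, `a3` are the
Jordan powers of `a`. -/
theorem stmt_16 {F : Type*} [Field F] [CharZero F]
    {A : Type*} [AddCommGroup A] [Module F A]
    (mo mb : A →ₗ[F] A →ₗ[F] A)
    (oassoc : ∀ x y z : A, mo (mo x y) z = mo x (mo y z))
    (bassoc : ∀ x y z : A, mb (mb x y) z = mb x (mb y z))
    (interchange : ∀ w x y z : A, mb (mo w x) (mo y z) = mo (mb w y) (mb x z))
    (l j : A → A → A)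
    (hl : ∀ x y : A, l x y = mo x y - mo y x)
    (hj : ∀ x y : A, j x y = mb x y + mb y x)
    (a b : A) (a2 a3 : A)
    (h2 : a2 = j a a) (h3 : a3 = j a a2) :
    j (l a b) (l a2 a3) - j (l a a2) (l b a3) + j (l b a2) (l a a3) = 0 := by
  subst h2 h3
  simp only [hl, hj, map_add, map_sub, LinearMap.add_apply, LinearMap.sub_apply]
  simp only [interchange]
  simp only [bassoc]
  abel
end

section
/- Let A be an associative interchange algebra over a field F of characteristic 0, with Lie bracket [x,y] = x∘y − y∘x and Jordan product {x,y} = x•y + y•x, and Jordan powers a² = {a,a}, a³ = {a,a²}, a⁴ = {a²,a²}. Then for all a, b in A: {[a,b], [a,a⁴]} + 2·{[a,a²], [a,{a,{a,b}}]} − {[a,a²], [a,{b,a²}]} − 2·{[a,{a,b}], [a,a³]} + {[b,a²], [a,a³]} + 2·{[a,a²], [a²,{a,b}]} = 0. -/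
/-- New Lie-Jordan identity in an associative interchange algebra, where `l` is the
Lie bracket of `∘`, `j` is the Jordan product of `•`, and `a2`, `a3`, `a4` are the
Jordan powers of `a`. -/
theorem stmt_17 {F : Type*} [Field F] [CharZero F]
    {A : Type*} [AddCommGroup A] [Module F A]
    (mo mb : A →ₗ[F] A →ₗ[F] A)
    (oassoc : ∀ x y z : A, mo (mo x y) z = mo x (mo y z))
    (bassoc : ∀ x y z : A, mb (mb x y) z = mb x (mb y z))
    (interchange : ∀ w x y z : A, mb (mo w x) (mo y z) = mo (mb w y) (mb x z))
    (l j : A → A → A)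
    (hl : ∀ x y : A, l x y = mo x y - mo y x)
    (hj : ∀ x y : A, j x y = mb x y + mb y x)
    (a b : A) (a2 a3 a4 : A)
    (h2 : a2 = j a a) (h3 : a3 = j a a2) (h4 : a4 = j a2 a2) :
    j (l a b) (l a a4)
      + 2 • j (l a a2) (l a (j a (j a b)))
      - j (l a a2) (l a (j b a2))
      - 2 • j (l a (j a b)) (l a a3)
      + j (l b a2) (l a a3)
      + 2 • j (l a a2) (l a2 (j a b)) = 0 := by
  subst h2 h3 h4
  simp only [hl, hj, map_add, map_sub, LinearMap.add_apply, LinearMap.sub_apply,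
    oassoc, bassoc, interchange]
  abel
end

section
/- Let A be an associative interchange algebra over a field F of characteristic 0, with Jordan products {x,y}_∘ = x∘y + y∘x and {x,y}_• = x•y + y•x. Then for every a in A: {{a,a}_∘, {a, {{a,a}_∘, {a,a}_•}_∘}_•}_• + {{a,{a,a}_∘}_∘, {a, {a,{a,a}_•}_∘}_•}_• − {{a,{a,a}_∘}_•, {{a,a}_∘, {a,a}_•}_∘}_• − {{a,{a,a}_•}_∘, {a, {a,{a,a}_∘}_∘}_•}_• = 0. -/
set_option maxHeartbeats 2000000 in
/-- Identity relating the two Jordan products in an associative interchange algebra. -/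
theorem stmt_19 {F : Type*} [Field F] [CharZero F]
    {A : Type*} [AddCommGroup A] [Module F A]
    (mo mb : A →ₗ[F] A →ₗ[F] A)
    (oassoc : ∀ x y z : A, mo (mo x y) z = mo x (mo y z))
    (bassoc : ∀ x y z : A, mb (mb x y) z = mb x (mb y z))
    (interchange : ∀ w x y z : A, mb (mo w x) (mo y z) = mo (mb w y) (mb x z))
    (jo jb : A → A → A)
    (hjo : ∀ x y : A, jo x y = mo x y + mo y x)
    (hjb : ∀ x y : A, jb x y = mb x y + mb y x)
    (a : A) :
    jb (jo a a) (jb a (jo (jo a a) (jb a a)))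
      + jb (jo a (jo a a)) (jb a (jo a (jb a a)))
      - jb (jb a (jo a a)) (jo (jo a a) (jb a a))
      - jb (jo a (jb a a)) (jb a (jo a (jo a a))) = 0 := by
  simp only [hjo, hjb, map_add, LinearMap.add_apply, interchange, oassoc, bassoc]
  have h0 : mb (mo a a) (mb (mo a (mo a (mb a a))) a) = mb (mo a (mb a a)) (mb (mo a (mo a a)) a) := by
    conv_lhs => rw [← oassoc a a (mb a a), ← bassoc (mo a a) (mo (mo a a) (mb a a)) a, interchange a a (mo a a) (mb a a), ← bassoc a a a, ← interchange a (mb a a) (mo a a) a, bassoc (mo a (mb a a)) (mo (mo a a) a) a, oassoc a a a]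
  have h1 : mb (mo a a) (mb (mo (mb a a) (mo a a)) a) = mb (mo (mb a a) a) (mb (mo a (mo a a)) a) := by
    conv_lhs => rw [← bassoc (mo a a) (mo (mb a a) (mo a a)) a, interchange a a (mb a a) (mo a a), ← bassoc a a a, ← interchange (mb a a) a a (mo a a), bassoc (mo (mb a a) a) (mo a (mo a a)) a]
  have h2 : mb a (mo (mb a a) (mb (mo a (mb a a)) a)) = mb a (mo (mb a a) (mb (mo a a) (mb a a))) := by
    conv_lhs => rw [← interchange a (mo a (mb a a)) a a, ← oassoc a a (mb a a), interchange (mo a a) (mb a a) a a, bassoc a a a, ← interchange (mo a a) a a (mb a a), oassoc a a a, interchange a (mo a a) a (mb a a)]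
  have h3 : mb (mo a (mo a a)) (mb (mo a (mb a a)) a) = mb (mo a (mo a (mb a a))) (mb (mo a a) a) := by
    conv_lhs => rw [← oassoc a a a, ← bassoc (mo (mo a a) a) (mo a (mb a a)) a, interchange (mo a a) a a (mb a a), ← bassoc a a a, ← interchange (mo a a) (mb a a) a a, bassoc (mo (mo a a) (mb a a)) (mo a a) a, oassoc a a (mb a a)]
  have h4 : mb (mo a (mo a a)) (mb (mo (mb a a) a) a) = mb (mo (mb a a) (mo a a)) (mb (mo a a) a) := by
    conv_lhs => rw [← bassoc (mo a (mo a a)) (mo (mb a a) a) a, interchange a (mo a a) (mb a a) a, ← bassoc a a a, ← interchange (mb a a) (mo a a) a a, bassoc (mo (mb a a) (mo a a)) (mo a a) a]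
  have h5 : mb a (mo (mb a a) (mb a (mb a (mo a a)))) = mb a (mo (mb a a) (mb a (mo a (mb a a)))) := by
    conv_lhs => rw [← bassoc a a (mo a a), ← interchange a (mb a a) a (mo a a), ← oassoc a a a, interchange a (mb a a) (mo a a) a, bassoc a a a, ← interchange a a (mo a a) (mb a a), oassoc a a (mb a a), interchange a a a (mo a (mb a a))]
  rw [h0, h1, h2, h3, h4, h5]
  abel
end
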